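/- Let a ∈ (0, √2) and for λ ∈ [0,1) define ξ_a(λ) = (1/π)·arctan(2(a² − 1)λ√(1 − λ²)/(1 + (1 − a²)(2λ² − 1))). Then: (i) the denominator 1 + (1 − a²)(2λ² − 1) is strictly positive for all λ ∈ [0,1); (ii) ξ_a(0) = 0 and ξ_a(λ) → 0 as λ → 1⁻; (iii) if a ∈ (0,1), then ξ_a(λ) < 0 for all λ ∈ (0,1) and ξ_a attains its minimum over (0,1) at λ = a/√2, with ξ_a(a/√2) = (1/π)·arctan((a² − 1)/(a√(2 − a²))); (iv) if a ∈ (1, √2), then ξ_a(λ) > 0 for all λ ∈ (0,1) and ξ_a attains its maximum over (0,1) at λ = a/√2, with the same value ξ_a(a/√2) = (1/π)·arctan((a² − 1)/(a√(2 − a²))). -/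

import Mathlib

/-!
Write `ξ_a = π⁻¹ · arctan((a² − 1) · r_a)` with `r_a(λ) = 2λ√(1 − λ²) / D_a(λ)`, `D_a` the denominator. With
`λ = sin θ` the numerator and denominator of `r_a` are `sin 2θ` and `1 − (1 − a²) cos 2θ`, and
since `(a√(2 − a²))² + (1 − a²)² = 1`, Cauchy–Schwarz in the plane gives
`a√(2 − a²) · 2λ√(1 − λ²) ≤ D_a(λ)`, with equality at `λ = a/√2`. So `r_a` is maximal at
`a/√2`, and composing with `t ↦ arctan((a² − 1) t)`, which is increasing or decreasing according
to the sign of `a² − 1`, gives the maximum resp. minimum of `ξ_a`.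
-/

noncomputable def xiSSF (a x : ℝ) : ℝ :=
  1 / Real.pi *
    Real.arctan (2 * (a ^ 2 - 1) * x * Real.sqrt (1 - x ^ 2) /
      (1 + (1 - a ^ 2) * (2 * x ^ 2 - 1)))

open Real Set

lemma mul_add_mul_le_one_of_sq_add_sq_eq_one {u v p q : ℝ} (huv : u ^ 2 + v ^ 2 = 1)
    (hpq : p ^ 2 + q ^ 2 = 1) : u * p + v * q ≤ 1 := by
  nlinarith [sq_nonneg (u - p), sq_nonneg (v - q)]

namespace XiSSF

def denom (a x : ℝ) : ℝ := 1 + (1 - a ^ 2) * (2 * x ^ 2 - 1)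

noncomputable def ratio (a x : ℝ) : ℝ := 2 * x * √(1 - x ^ 2) / denom a x

variable {a x : ℝ}

lemma denom_pos (ha : a ≠ 0) (ha2 : a ^ 2 < 2) (hx : x ^ 2 ≤ 1) : 0 < denom a x := by
  have : 0 < a ^ 2 := by positivity
  unfold denom
  rcases le_total (a ^ 2) 1 with h | h <;> nlinarith [sq_nonneg x]

lemma xiSSF_eq_comp (a : ℝ) :
    xiSSF a = (fun t ↦ 1 / π * arctan ((a ^ 2 - 1) * t)) ∘ ratio a := by
  funext x
  simp only [xiSSF, ratio, denom, Function.comp_apply]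
  congr 2
  ring

lemma two_mul_mul_sqrt_mul_le_denom (ha2 : a ^ 2 ≤ 2) (hx : x ^ 2 ≤ 1) :
    2 * x * √(1 - x ^ 2) * (a * √(2 - a ^ 2)) ≤ denom a x := by
  have hs : √(1 - x ^ 2) ^ 2 = 1 - x ^ 2 := sq_sqrt (by linarith)
  have hw : √(2 - a ^ 2) ^ 2 = 2 - a ^ 2 := sq_sqrt (by linarith)
  have := mul_add_mul_le_one_of_sq_add_sq_eq_one
    (u := 2 * x * √(1 - x ^ 2)) (v := 1 - 2 * x ^ 2)
    (p := a * √(2 - a ^ 2)) (q := 1 - a ^ 2)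
    (by linear_combination 4 * x ^ 2 * hs) (by linear_combination a ^ 2 * hw)
  unfold denom
  linarith

lemma ratio_pos (ha : a ≠ 0) (ha2 : a ^ 2 < 2) (hx : x ∈ Ioo 0 1) : 0 < ratio a x := by
  have hx2 : x ^ 2 < 1 := by nlinarith [hx.1, hx.2]
  have : 0 < √(1 - x ^ 2) := sqrt_pos.mpr (by linarith)
  exact div_pos (by nlinarith [hx.1]) (denom_pos ha ha2 hx2.le)

lemma ratio_div_sqrt_two (ha : 0 < a) (ha2 : a ^ 2 < 2) :
    ratio a (a / √2) = 1 / (a * √(2 - a ^ 2)) := by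
  have h2 : √2 ^ 2 = 2 := sq_sqrt (by norm_num)
  have hw : √(2 - a ^ 2) ^ 2 = 2 - a ^ 2 := sq_sqrt (by linarith)
  have hw0 : 0 < √(2 - a ^ 2) := sqrt_pos.mpr (by linarith)
  have hsq : (a / √2) ^ 2 = a ^ 2 / 2 := by rw [div_pow, h2]
  have hnum : 2 * (a / √2) * √(1 - (a / √2) ^ 2) = a * √(2 - a ^ 2) := by
    rw [hsq, show 1 - a ^ 2 / 2 = (2 - a ^ 2) / 2 by ring, sqrt_div' _ (by norm_num : (0 : ℝ) ≤ 2)]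
    field_simp
    exact h2.symm
  have hden : denom a (a / √2) = (a * √(2 - a ^ 2)) ^ 2 := by
    rw [denom, hsq, mul_pow, hw]; ring
  rw [ratio, hnum, hden]
  field_simp

lemma isMaxOn_ratio (ha : 0 < a) (ha2 : a ^ 2 < 2) :
    IsMaxOn (ratio a) (Icc (-1) 1) (a / √2) := by
  intro x hx
  have hx2 : x ^ 2 ≤ 1 := by nlinarith [hx.1, hx.2]
  have hw : 0 < a * √(2 - a ^ 2) := mul_pos ha (sqrt_pos.mpr (by linarith))
  have hD : 0 < denom a x := denom_pos ha.ne' ha2 hx2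
  show ratio a x ≤ ratio a (a / √2)
  rw [ratio_div_sqrt_two ha ha2, ratio, div_le_div_iff₀ hD hw, one_mul]
  exact two_mul_mul_sqrt_mul_le_denom ha2.le hx2

lemma continuousAt_xiSSF_one (ha2 : a ^ 2 ≠ 2) : ContinuousAt (xiSSF a) 1 := by
  unfold xiSSF
  refine continuousAt_const.mul (continuous_arctan.continuousAt.comp ?_)
  refine ContinuousAt.div (by fun_prop) (by fun_prop) ?_
  contrapose! ha2
  linarith

lemma xiSSF_neg (ha : a ≠ 0) (ha1 : a ^ 2 < 1) (hx : x ∈ Ioo 0 1) : xiSSF a x < 0 := by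
  rw [xiSSF_eq_comp, Function.comp_apply]
  exact mul_neg_of_pos_of_neg (by positivity) <| arctan_lt_zero.mpr <|
    mul_neg_of_neg_of_pos (by linarith) (ratio_pos ha (by linarith) hx)

lemma xiSSF_pos (ha1 : 1 < a ^ 2) (ha2 : a ^ 2 < 2) (hx : x ∈ Ioo 0 1) : 0 < xiSSF a x := by
  rw [xiSSF_eq_comp, Function.comp_apply]
  exact mul_pos (by positivity) <| arctan_pos.mpr <|
    mul_pos (by linarith) (ratio_pos (by rintro rfl; norm_num at ha1) ha2 hx)

lemma isMinOn_xiSSF (ha : 0 < a) (ha1 : a ^ 2 ≤ 1) :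
    IsMinOn (xiSSF a) (Icc (-1) 1) (a / √2) := by
  rw [xiSSF_eq_comp]
  exact (isMaxOn_ratio ha (by linarith)).comp_antitone <|
    (arctan_strictMono.monotone.comp_antitone (antitone_mul_left (by linarith))).const_mul
      (by positivity)

lemma isMaxOn_xiSSF (ha : 0 < a) (ha1 : 1 ≤ a ^ 2) (ha2 : a ^ 2 < 2) :
    IsMaxOn (xiSSF a) (Icc (-1) 1) (a / √2) := by
  rw [xiSSF_eq_comp]
  exact (isMaxOn_ratio ha ha2).comp_mono <|
    (arctan_strictMono.monotone.comp (monotone_mul_left_of_nonneg (by linarith))).const_mul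
      (by positivity)

lemma xiSSF_div_sqrt_two (ha : 0 < a) (ha2 : a ^ 2 < 2) :
    xiSSF a (a / √2) = 1 / π * arctan ((a ^ 2 - 1) / (a * √(2 - a ^ 2))) := by
  rw [xiSSF_eq_comp, Function.comp_apply, ratio_div_sqrt_two ha ha2, mul_one_div]

end XiSSF

open XiSSF

/-- Properties of the spectral shift function for `a ∈ (0, √2)`: the denominator is
positive on `[0,1)`; `ξ_a(0) = 0` and `ξ_a(λ) → 0` as `λ → 1⁻`; for `a ∈ (0,1)`,
`ξ_a < 0` on `(0,1)` with minimum at `λ = a/√2`; for `a ∈ (1,√2)`, `ξ_a > 0` on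
`(0,1)` with maximum at `λ = a/√2`; in both cases
`ξ_a(a/√2) = (1/π)·arctan((a² − 1)/(a√(2 − a²)))`. -/
theorem stmt10 (a : ℝ) (ha : a ∈ Set.Ioo 0 (Real.sqrt 2)) :
    (∀ x ∈ Set.Ico (0 : ℝ) 1, 0 < 1 + (1 - a ^ 2) * (2 * x ^ 2 - 1)) ∧
    xiSSF a 0 = 0 ∧
    Filter.Tendsto (xiSSF a) (nhdsWithin 1 (Set.Iio 1)) (nhds 0) ∧
    (a < 1 →
      (∀ x ∈ Set.Ioo (0 : ℝ) 1, xiSSF a x < 0) ∧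
      IsMinOn (xiSSF a) (Set.Ioo 0 1) (a / Real.sqrt 2) ∧
      xiSSF a (a / Real.sqrt 2) =
        1 / Real.pi * Real.arctan ((a ^ 2 - 1) / (a * Real.sqrt (2 - a ^ 2)))) ∧
    (1 < a →
      (∀ x ∈ Set.Ioo (0 : ℝ) 1, 0 < xiSSF a x) ∧
      IsMaxOn (xiSSF a) (Set.Ioo 0 1) (a / Real.sqrt 2) ∧
      xiSSF a (a / Real.sqrt 2) =
        1 / Real.pi * Real.arctan ((a ^ 2 - 1) / (a * Real.sqrt (2 - a ^ 2)))) := by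
  obtain ⟨ha0, haS⟩ := ha
  have ha2 : a ^ 2 < 2 := (lt_sqrt ha0.le).mp haS
  have hsub : Ioo (0 : ℝ) 1 ⊆ Icc (-1) 1 := fun x hx ↦ ⟨by linarith [hx.1], hx.2.le⟩
  have hval := xiSSF_div_sqrt_two ha0 ha2
  refine ⟨fun x hx ↦ denom_pos ha0.ne' ha2 (by nlinarith [hx.1, hx.2]), by simp [xiSSF], ?_,
    fun ha1 ↦ ⟨?_, ?_, hval⟩, fun ha1 ↦ ⟨?_, ?_, hval⟩⟩
  · simpa [xiSSF] using ((continuousAt_xiSSF_one ha2.ne).continuousWithinAt (s := Iio 1)).tendsto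
  · exact fun x ↦ xiSSF_neg ha0.ne' (by nlinarith)
  · exact (isMinOn_xiSSF ha0 (by nlinarith)).on_subset hsub
  · exact fun x ↦ xiSSF_pos (by nlinarith) ha2
  · exact (isMaxOn_xiSSF ha0 (by nlinarith) ha2).on_subset hsub
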